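/- arXiv:1904.09224 — 2 statements merged into one kernel-verified Lean document; each statement's English description precedes it below -/
import Mathlib

section
/- Let 0 ≤ p < q be integers. Then, as ℚ-linear endomorphisms of B, one has e_p ∘ e_q − e_q ∘ e_p = 2 · ∑_{a=p}^{q−1} e_a ∘ f_{p+q−a}. -/
/-!
`B = ℚ[w_1, w_2, …]` realized as `MvPolynomial ℕ ℚ`, where the `i`-th variable
`X i` is `w_{i+1}` (so every variable is some `w_n` with `n ≥ 1`).
`f n` is multiplication by `w n`, and `e p` is the unique ℚ-linear derivation
with the prescribed values on the variables.
-/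

open MvPolynomial Finset

noncomputable section

abbrev B : Type := MvPolynomial ℕ ℚ

/-- The variable `w_n` of `B` (meaningful for `n ≥ 1`). -/
def w (n : ℕ) : B := MvPolynomial.X (n - 1)

/-- The prescribed value of the derivation `e_p` on the variable `w_m`:
`e_p(w_m) = ∑_{k=p+1}^{m-1} w_k w_{p+m-k}` if `p < m`, and
`e_p(w_m) = -∑_{k=m}^{p} w_k w_{p+m-k}` if `p ≥ m`. -/
def eVal (p m : ℕ) : B :=
  if p < m then ∑ k ∈ Icc (p + 1) (m - 1), w k * w (p + m - k)
  else - ∑ k ∈ Icc m p, w k * w (p + m - k)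

/-- The derivation `e_p`, as a ℚ-linear endomorphism of `B`.
(The `i`-th variable of `B` is `w_{i+1}`.) -/
def e (p : ℕ) : B →ₗ[ℚ] B :=
  (MvPolynomial.mkDerivation ℚ (fun i : ℕ => eVal p (i + 1))).toLinearMap

/-- Multiplication by `w_n`, as a ℚ-linear endomorphism of `B` (for `n ≥ 1`). -/
def f (n : ℕ) : B →ₗ[ℚ] B := LinearMap.mulLeft ℚ (w n)

/-!
The constant terms `∑ₐ e_a(w_{p+q-a})` of the right-hand side cancel in pairs, because
`e_{m-1}(w_{a+1}) = -e_a(w_m)`; what remains is a derivation, like the commutator on the left,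
so it suffices to compare both sides on a variable `w_m`. There, the formulas
`e_p(w_m) = ∑_{i+j=p+m} ±w_i w_j`, with sign `+` iff `p < i`, or equivalently iff `i < m`,
turn both sides into cubic forms `∑_{a+b+c=p+q+m} κ(a,c) w_a w_b w_c`, and the coefficient
`κ` of their difference is antisymmetric in `a ↔ c`, so the difference vanishes.
-/

theorem Finset.sum_Icc_reflect {M : Type*} [AddCommMonoid M] (f : ℕ → M) (a b : ℕ) :
    ∑ k ∈ Icc a b, f (a + b - k) = ∑ k ∈ Icc a b, f k :=
  sum_nbij' (a + b - ·) (a + b - ·) (by intro k; simp only [mem_Icc]; omega)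
    (by intro k; simp only [mem_Icc]; omega) (by intro k; simp only [mem_Icc]; omega)
    (by intro k; simp only [mem_Icc]; omega) fun _ _ => rfl

theorem Finset.sum_Icc_one_sub_reflect {M : Type*} [AddCommMonoid M] (f : ℕ → M) (n : ℕ) :
    ∑ k ∈ Icc 1 (n - 1), f (n - k) = ∑ k ∈ Icc 1 (n - 1), f k := by
  rcases n with _ | n
  · simp
  · simpa [add_comm 1 n] using sum_Icc_reflect f 1 n

theorem Finset.sum_Icc_smul_congr_of_reflect {R M : Type*} [Semiring R] [AddCommMonoid M]
    [Module R M] [IsAddTorsionFree M] {n : ℕ} {v : ℕ → M}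
    (hv : ∀ k ∈ Icc 1 (n - 1), v (n - k) = v k) {c d : ℕ → R}
    (hcd : ∀ k ∈ Icc 1 (n - 1), c k + c (n - k) = d k + d (n - k)) :
    ∑ k ∈ Icc 1 (n - 1), c k • v k = ∑ k ∈ Icc 1 (n - 1), d k • v k := by
  have two_smul_eq (c : ℕ → R) :
      2 • ∑ k ∈ Icc 1 (n - 1), c k • v k = ∑ k ∈ Icc 1 (n - 1), (c k + c (n - k)) • v k := by
    rw [two_nsmul]
    nth_rewrite 2 [← sum_Icc_one_sub_reflect]
    rw [← sum_add_distrib]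
    exact sum_congr rfl fun k hk => by rw [hv k hk, add_smul]
  apply nsmul_right_injective two_ne_zero
  simp only [two_smul_eq]
  exact sum_congr rfl fun k hk => by rw [hcd k hk]

theorem Derivation.map_sum_smul_mul_reflect {R A M : Type*} [CommSemiring R] [CommSemiring A]
    [AddCommMonoid M] [Algebra R A] [Module A M] [Module R M] [IsScalarTower R A M]
    (D : Derivation R A M) (u : ℕ → A) (c : ℕ → R) (n : ℕ) :
    D (∑ k ∈ Icc 1 (n - 1), c k • (u k * u (n - k)))
      = ∑ k ∈ Icc 1 (n - 1), (c k + c (n - k)) • u k • D (u (n - k)) := by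
  simp only [map_sum, map_smul, Derivation.leibniz, smul_add, add_smul, sum_add_distrib]
  congr 1
  rw [← sum_Icc_one_sub_reflect]
  refine sum_congr rfl fun k hk => ?_
  rw [Nat.sub_sub_self (by simp only [mem_Icc] at hk; omega)]

theorem Derivation.sum_apply {ι R A M : Type*} [CommSemiring R] [CommSemiring A] [AddCommMonoid M]
    [Algebra R A] [Module A M] [Module R M] (s : Finset ι) (D : ι → Derivation R A M) (a : A) :
    (∑ i ∈ s, D i) a = ∑ i ∈ s, D i a := by
  rw [← coeFnAddMonoidHom_apply, map_sum, Finset.sum_apply]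
  rfl

def ltSign (i j : ℕ) : ℚ := if i < j then 1 else -1

theorem w_mul_w_reflect (n k : ℕ) (hk : k ≤ n) : w (n - k) * w (n - (n - k)) = w k * w (n - k) := by
  rw [Nat.sub_sub_self hk, mul_comm]

theorem eVal_eq_sum_ltSign_left (p m : ℕ) (hm : 1 ≤ m) :
    eVal p m = ∑ k ∈ Icc 1 (p + m - 1), ltSign p k • (w k * w (p + m - k)) := by
  set χ : ℕ → ℚ := fun k => if p < k ∧ k < m then 1 else if m ≤ k ∧ k ≤ p then -1 else 0
  have hχ : eVal p m = ∑ k ∈ Icc 1 (p + m - 1), χ k • (w k * w (p + m - k)) := by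
    simp only [χ, ite_smul, one_smul, neg_smul, zero_smul]
    rw [eVal]
    split_ifs with h
    · rw [← inter_eq_right.mpr (Icc_subset_Icc (by omega) (by omega) :
        Icc (p + 1) (m - 1) ⊆ Icc 1 (p + m - 1)), ← sum_ite_mem]
      refine sum_congr rfl fun k _ => ?_
      simp only [mem_Icc]
      split_ifs <;> first | rfl | omega
    · rw [← inter_eq_right.mpr (Icc_subset_Icc (by omega) (by omega) :
        Icc m p ⊆ Icc 1 (p + m - 1)), ← sum_ite_mem, ← sum_neg_distrib]
      refine sum_congr rfl fun k _ => ?_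
      simp only [mem_Icc]
      split_ifs <;> first | rfl | omega
  rw [hχ]
  refine sum_Icc_smul_congr_of_reflect (fun k hk => ?_) fun k hk => ?_
  · exact w_mul_w_reflect _ _ (by simp only [mem_Icc] at hk; omega)
  · simp only [mem_Icc] at hk
    simp only [χ, ltSign]
    split_ifs <;> first | omega | norm_num

theorem eVal_eq_sum_ltSign_right (p m : ℕ) (hm : 1 ≤ m) :
    eVal p m = ∑ k ∈ Icc 1 (p + m - 1), ltSign k m • (w k * w (p + m - k)) := by
  rw [eVal_eq_sum_ltSign_left p m hm]
  refine sum_Icc_smul_congr_of_reflect (fun k hk => ?_) fun k hk => ?_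
  · exact w_mul_w_reflect _ _ (by simp only [mem_Icc] at hk; omega)
  · simp only [mem_Icc] at hk
    simp only [ltSign]
    split_ifs <;> first | omega | norm_num

theorem eVal_pred_succ (a m : ℕ) (hm : 1 ≤ m) : eVal (m - 1) (a + 1) = -eVal a m := by
  rw [eVal, eVal, show m - 1 + (a + 1) = a + m by omega, Nat.sub_add_cancel hm, Nat.add_sub_cancel]
  split_ifs with h₁ h₂ h₂
  · rw [Icc_eq_empty (by omega), Icc_eq_empty (by omega), sum_empty, neg_zero]
  · rw [neg_neg]
  · rfl
  · omega

theorem sum_eVal_eq_zero (p q : ℕ) (hq : 0 < q) : ∑ a ∈ Icc p (q - 1), eVal a (p + q - a) = 0 := by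
  refine self_eq_neg.mp ?_
  nth_rewrite 1 [← sum_Icc_reflect]
  rw [← sum_neg_distrib]
  refine sum_congr rfl fun a ha => ?_
  simp only [mem_Icc] at ha
  rw [← eVal_pred_succ _ _ (by omega)]
  congr 1 <;> omega

def eDer (p : ℕ) : Derivation ℚ B B := mkDerivation ℚ fun i : ℕ => eVal p (i + 1)

theorem e_apply (p : ℕ) (z : B) : e p z = eDer p z := rfl

theorem eDer_w (p : ℕ) {m : ℕ} (hm : 1 ≤ m) : eDer p (w m) = eVal p m := by
  rw [eDer, w, mkDerivation_X, Nat.sub_add_cancel hm]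

/-- `∑_{a + b + c = T; a, b, c ≥ 1} κ a c • w_a w_b w_c`, the middle index being `b = T - c - a`. -/
def cubicSum (T : ℕ) (κ : ℕ → ℕ → ℚ) : B :=
  ∑ c ∈ Icc 1 T, ∑ a ∈ Icc 1 (T - c - 1), κ a c • (w c * (w a * w (T - c - a)))

theorem cubicSum_sub (T : ℕ) (κ κ' : ℕ → ℕ → ℚ) :
    cubicSum T (κ - κ') = cubicSum T κ - cubicSum T κ' := by
  simp only [cubicSum, Pi.sub_apply, sub_smul, sum_sub_distrib]

theorem cubicSum_eq_sum_of_support {T : ℕ} {κ : ℕ → ℕ → ℚ} {S : Finset ℕ} (hS : S ⊆ Icc 1 T)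
    (hκ : ∀ c ∈ Icc 1 T, c ∉ S → ∀ a, κ a c = 0) :
    cubicSum T κ = ∑ c ∈ S, ∑ a ∈ Icc 1 (T - c - 1), κ a c • (w c * (w a * w (T - c - a))) :=
  (sum_subset hS fun c hc hcS => sum_eq_zero fun a _ => by rw [hκ c hc hcS a, zero_smul]).symm

theorem cubicSum_eq_zero_of_antisymm {T : ℕ} {κ : ℕ → ℕ → ℚ} (hκ : ∀ a c, κ a c + κ c a = 0) :
    cubicSum T κ = 0 := by
  rw [cubicSum, ← sum_finset_product_right' ((Icc 1 T ×ˢ Icc 1 T).filter fun x => x.1 + x.2 < T)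
    _ _ (by simp only [mem_filter, mem_product, mem_Icc]; omega)]
  refine sum_involution (fun x _ => x.swap) (fun x _ => ?_) (fun x _ hx hswap => ?_)
    (by simp only [mem_filter, mem_product, mem_Icc, Prod.fst_swap, Prod.snd_swap]; omega)
    fun _ _ => rfl
  · obtain ⟨a, c⟩ := x
    rw [Prod.fst_swap, Prod.snd_swap, Nat.sub_right_comm T a c,
      show w a * (w c * w (T - c - a)) = w c * (w a * w (T - c - a)) by ring, ← add_smul, hκ,
      zero_smul]
  · obtain ⟨a, c⟩ := x
    obtain rfl : c = a := congrArg Prod.fst hswap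
    have : κ c c = 0 := by linarith [hκ c c]
    exact hx (by rw [this, zero_smul])

theorem eDer_eVal_eq_cubicSum (x y m : ℕ) (hm : 1 ≤ m) :
    eDer x (eVal y m) = cubicSum (x + y + m) fun a c => (ltSign y c + ltSign c m) * ltSign x a := by
  rw [eVal_eq_sum_ltSign_left y m hm, Derivation.map_sum_smul_mul_reflect,
    cubicSum_eq_sum_of_support (S := Icc 1 (y + m - 1)) (Icc_subset_Icc le_rfl (by omega))
      fun c hc hcS a => ?_]
  · refine sum_congr rfl fun c hc => ?_
    simp only [mem_Icc] at hc
    have hsign : ltSign y (y + m - c) = ltSign c m := by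
      simp only [ltSign]; split_ifs <;> first | rfl | omega
    rw [eDer_w x (by omega), eVal_eq_sum_ltSign_left x _ (by omega), hsign,
      show x + (y + m - c) = x + y + m - c by omega, smul_sum, smul_sum]
    refine sum_congr rfl fun a _ => ?_
    rw [smul_eq_mul, mul_smul_comm, smul_smul]
  · simp only [mem_Icc] at hc hcS
    simp only [ltSign]
    split_ifs <;> first | omega | norm_num

theorem two_smul_sum_mul_eVal_eq_cubicSum (p q m : ℕ) (hpq : p < q) (hm : 1 ≤ m) :
    (2 : ℚ) • ∑ a ∈ Icc p (q - 1), w (p + q - a) * eVal a m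
      = cubicSum (p + q + m) fun a c => (ltSign p c - ltSign q c) * ltSign a m := by
  rw [cubicSum_eq_sum_of_support (S := Icc (p + 1) q) (Icc_subset_Icc (by omega) (by omega))
      fun c hc hcS a => ?_, smul_sum]
  · refine sum_nbij' (p + q - ·) (p + q - ·) (by intro k; simp only [mem_Icc]; omega)
      (by intro k; simp only [mem_Icc]; omega) (by intro k; simp only [mem_Icc]; omega)
      (by intro k; simp only [mem_Icc]; omega) fun a ha => ?_
    simp only [mem_Icc] at ha
    have hsign : ltSign p (p + q - a) - ltSign q (p + q - a) = 2 := by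
      simp only [ltSign]; split_ifs <;> first | omega | norm_num
    rw [show p + q + m - (p + q - a) = a + m by omega, eVal_eq_sum_ltSign_right a m hm, mul_sum,
      smul_sum]
    refine sum_congr rfl fun b _ => ?_
    rw [hsign, mul_smul_comm, smul_smul]
  · simp only [mem_Icc] at hc hcS
    simp only [ltSign]
    split_ifs <;> first | omega | norm_num

theorem eDer_eVal_sub_eDer_eVal (p q m : ℕ) (hpq : p < q) (hm : 1 ≤ m) :
    eDer p (eVal q m) - eDer q (eVal p m)
      = (2 : ℚ) • ∑ a ∈ Icc p (q - 1), w (p + q - a) * eVal a m := by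
  rw [eDer_eVal_eq_cubicSum p q m hm, eDer_eVal_eq_cubicSum q p m hm,
    two_smul_sum_mul_eVal_eq_cubicSum p q m hpq hm,
    add_comm q p, ← sub_eq_zero, ← cubicSum_sub, ← cubicSum_sub]
  exact cubicSum_eq_zero_of_antisymm fun a c => by simp only [Pi.sub_apply]; ring

theorem lie_eDer (p q : ℕ) (hpq : p < q) :
    ⁅eDer p, eDer q⁆ = (2 : ℚ) • ∑ a ∈ Icc p (q - 1), w (p + q - a) • eDer a := by
  refine derivation_ext fun i => ?_
  have hX (a : ℕ) : eDer a (X i) = eVal a (i + 1) := mkDerivation_X _ _ _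
  rw [Derivation.commutator_apply, hX, hX, eDer_eVal_sub_eDer_eVal p q (i + 1) hpq (by omega),
    Derivation.smul_apply, Derivation.sum_apply]
  simp only [Derivation.smul_apply, smul_eq_mul, hX]

theorem e_comp_f_apply (a : ℕ) {n : ℕ} (hn : 1 ≤ n) (z : B) :
    (e a ∘ₗ f n) z = w n * e a z + eVal a n * z := by
  rw [LinearMap.comp_apply, e_apply, e_apply, f, LinearMap.mulLeft_apply, Derivation.leibniz,
    eDer_w a hn, smul_eq_mul, smul_eq_mul, mul_comm z]

/-- For `0 ≤ p < q`:
`e_p ∘ e_q − e_q ∘ e_p = 2 · ∑_{a=p}^{q−1} e_a ∘ f_{p+q−a}`. -/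
theorem comm_e_e_left (p q : ℕ) (hpq : p < q) :
    e p ∘ₗ e q - e q ∘ₗ e p = 2 • ∑ a ∈ Icc p (q - 1), e a ∘ₗ f (p + q - a) := by
  refine LinearMap.ext fun z => ?_
  have hlie := DFunLike.congr_fun (lie_eDer p q hpq) z
  rw [Derivation.commutator_apply, Derivation.smul_apply, Derivation.sum_apply] at hlie
  calc (e p ∘ₗ e q - e q ∘ₗ e p) z = (2 : ℚ) • ∑ a ∈ Icc p (q - 1), w (p + q - a) * e a z := hlie
    _ = 2 • ∑ a ∈ Icc p (q - 1), (w (p + q - a) * e a z + eVal a (p + q - a) * z) := by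
      rw [sum_add_distrib, ← sum_mul, sum_eVal_eq_zero p q (by omega), zero_mul, add_zero, two_smul,
        two_nsmul]
    _ = (2 • ∑ a ∈ Icc p (q - 1), e a ∘ₗ f (p + q - a)) z := by
      rw [LinearMap.smul_apply, LinearMap.sum_apply]
      exact congrArg _ (sum_congr rfl fun a ha =>
        (e_comp_f_apply a (by simp only [mem_Icc] at ha; omega) z).symm)

end
end

section
/- Let 0 ≤ p < q be integers. Then, as ℚ-linear endomorphisms of B, one has e_p ∘ f_{q+1} − f_{q+1} ∘ e_p = ∑_{k=p+1}^{q} f_k ∘ f_{p+q+1−k}. -/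
/-!
`B = ℚ[w_1, w_2, …]` realized as `MvPolynomial ℕ ℚ`, where the `i`-th variable
`X i` is `w_{i+1}` (so every variable is some `w_n` with `n ≥ 1`).
`f n` is multiplication by `w n`, and `e p` is the unique ℚ-linear derivation
with the prescribed values on the variables.
-/

open MvPolynomial Finset

noncomputable section

theorem Derivation.comp_mulLeft_sub_mulLeft_comp {R A : Type*} [CommSemiring R] [CommRing A]
    [Algebra R A] (D : Derivation R A A) (a : A) :
    D.toLinearMap ∘ₗ LinearMap.mulLeft R a - LinearMap.mulLeft R a ∘ₗ D.toLinearMap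
      = LinearMap.mulLeft R (D a) := by
  ext x
  simp [D.leibniz, mul_comm]

theorem LinearMap.mulLeft_sum {R A ι : Type*} [CommSemiring R] [Semiring A] [Algebra R A]
    (s : Finset ι) (a : ι → A) :
    LinearMap.mulLeft R (∑ i ∈ s, a i) = ∑ i ∈ s, LinearMap.mulLeft R (a i) :=
  map_sum (LinearMap.mul R A) a s

theorem e_apply_w (p : ℕ) {m : ℕ} (hm : 1 ≤ m) : e p (w m) = eVal p m := by
  obtain ⟨i, rfl⟩ := Nat.exists_eq_add_of_le' hm
  simp [e, w, mkDerivation_X]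

theorem eVal_of_lt {p m : ℕ} (h : p < m) :
    eVal p m = ∑ k ∈ Icc (p + 1) (m - 1), w k * w (p + m - k) := if_pos h

theorem e_comp_f_sub_f_comp_e (p n : ℕ) :
    e p ∘ₗ f n - f n ∘ₗ e p = LinearMap.mulLeft ℚ (e p (w n)) :=
  Derivation.comp_mulLeft_sub_mulLeft_comp _ _

/-- For `0 ≤ p < q`:
`e_p ∘ f_{q+1} − f_{q+1} ∘ e_p = ∑_{k=p+1}^{q} f_k ∘ f_{p+q+1−k}`. -/
theorem comm_e_f_lt (p q : ℕ) (hpq : p < q) :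
    e p ∘ₗ f (q + 1) - f (q + 1) ∘ₗ e p
      = ∑ k ∈ Icc (p + 1) q, f k ∘ₗ f (p + q + 1 - k) := by
  rw [e_comp_f_sub_f_comp_e, e_apply_w p (by omega),
    eVal_of_lt (by omega), LinearMap.mulLeft_sum]
  simp only [LinearMap.mulLeft_mul, f, Nat.add_sub_cancel, Nat.add_assoc]

end
end
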